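/- Let Ω ⊂ ℝ^d be measurable with finite positive measure, s ∈ (1,∞) with conjugate exponent r, and q_{s,0}(u) = λ({u ≠ 0}) on L^s(Ω). For ū ∈ L^s(Ω), the Fréchet subdifferential of q_{s,0} at ū equals {η ∈ L^r(Ω) : η = 0 a.e. on {ū ≠ 0}} if ū is an s-SD function, and is empty otherwise. -/

import Mathlib

/-!
Under a perturbation `h`, the support measure `q(u) = μ {u ≠ 0}` changes by exactly
`μ B - μ A`, where `A = {u ≠ 0, u + h = 0}` is the part of the support that `h` cancels
and `B = {u = 0, h ≠ 0}` the part it creates. On `A` we have `|u| = |h|`, so the s-SD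
property, in its uniform ε-δ form, gives `μ A = o(‖h‖_s)`. If `η = 0` on `{u ≠ 0}`, then
`∫ η h = ∫_B η h`, and either `μ B ≥ K ‖h‖_s` dominates the Hölder bound `‖η‖_r ‖h‖_s`,
or `B` is small and so is `‖η‖_{r,B}`; this is the subgradient inequality.

Conversely, the directions `h = c 1_E` with `E ⊆ {u ≠ 0}` cannot enlarge the support,
which forces `∫_E η = 0`, hence `η = 0` on `{u ≠ 0}`; the directions `h = -u 1_A` lower
`q` by `μ A` at cost `‖u‖_{s,A}`, which is the s-SD property.
-/

open MeasureTheory Real Filter Topology Set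
open scoped ENNReal

/-- The `L^s`-norm `(∫ |u|^s dμ)^(1/s)` as a real number. -/
noncomputable def Lnorm {X : Type*} [MeasurableSpace X] (μ : Measure X) (s : ℝ)
    (u : X → ℝ) : ℝ :=
  (∫ x, |u x| ^ s ∂μ) ^ (1 / s)

/-- `ubar` is an order-`s` slowly decreasing (s-SD) function: for every sequence of
measurable subsets `Ωk k ⊆ {ubar ≠ 0}` with positive measures tending to `0`,
the quotients `μ(Ωk k) / ‖ubar‖_{s,Ωk k}` tend to `0`. -/
def IsSD {X : Type*} [MeasurableSpace X] (μ : Measure X) (s : ℝ) (ubar : X → ℝ) : Prop :=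
  ∀ Ωk : ℕ → Set X, (∀ k, MeasurableSet (Ωk k)) →
    (∀ k, Ωk k ⊆ {x | ubar x ≠ 0}) → (∀ k, 0 < (μ (Ωk k)).toReal) →
    Tendsto (fun k => (μ (Ωk k)).toReal) atTop (𝓝 0) →
    Tendsto (fun k => (μ (Ωk k)).toReal / Lnorm (μ.restrict (Ωk k)) s ubar) atTop (𝓝 0)

/-- `η` belongs to the Fréchet subdifferential of `q` at `ubar` (with respect to the
`L^s(μ)`-norm): the liminf of the difference quotients is nonnegative, stated in
ε-δ form. -/
def InFSub {X : Type*} [MeasurableSpace X] (μ : Measure X) (s : ℝ)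
    (q : (X → ℝ) → ℝ) (ubar η : X → ℝ) : Prop :=
  ∀ ε > 0, ∃ δ > 0, ∀ h : X → ℝ, MemLp h (ENNReal.ofReal s) μ →
    0 < Lnorm μ s h → Lnorm μ s h ≤ δ →
    q (fun x => ubar x + h x) - q ubar - ∫ x, η x * h x ∂μ ≥ -ε * Lnorm μ s h

section

variable {X : Type*} [MeasurableSpace X] {μ : Measure X} {s r : ℝ} {u v η h : X → ℝ}
  {A : Set X}

/-- The functional `q_{s,0}` of the paper. -/
def suppMeasure (μ : Measure X) (u : X → ℝ) : ℝ := μ.real {x | u x ≠ 0}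

def IsUniformlySD (μ : Measure X) (s : ℝ) (u : X → ℝ) : Prop :=
  ∀ ε > 0, ∃ δ > 0, ∀ A, MeasurableSet A → A ⊆ {x | u x ≠ 0} →
    Lnorm (μ.restrict A) s u ≤ δ → μ.real A ≤ ε * Lnorm (μ.restrict A) s u

lemma Lnorm_nonneg : 0 ≤ Lnorm μ s u :=
  rpow_nonneg (integral_nonneg fun _ => rpow_nonneg (abs_nonneg _) _) _

lemma Lnorm_rpow (hs : s ≠ 0) : Lnorm μ s u ^ s = ∫ x, |u x| ^ s ∂μ := by
  rw [Lnorm, ← rpow_mul (integral_nonneg fun _ => rpow_nonneg (abs_nonneg _) _),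
    one_div_mul_cancel hs, rpow_one]

lemma Lnorm_congr_ae (huv : ∀ᵐ x ∂μ, |u x| = |v x|) : Lnorm μ s u = Lnorm μ s v := by
  have : (fun x => |u x| ^ s) =ᵐ[μ] fun x => |v x| ^ s := huv.mono fun x hx => by simp only [hx]
  rw [Lnorm, Lnorm, integral_congr_ae this]

lemma Lnorm_indicator (hs : s ≠ 0) (hA : MeasurableSet A) (u : X → ℝ) :
    Lnorm μ s (A.indicator u) = Lnorm (μ.restrict A) s u := by
  have : (fun x => |A.indicator u x| ^ s) = A.indicator fun x => |u x| ^ s := by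
    ext x
    by_cases hx : x ∈ A <;> simp [hx, zero_rpow hs]
  rw [Lnorm, this, integral_indicator hA, Lnorm]

lemma MeasureTheory.MemLp.integrable_abs_rpow (hs : 0 < s) (hu : MemLp u (ENNReal.ofReal s) μ) :
    Integrable (fun x => |u x| ^ s) μ := by
  simpa [ENNReal.toReal_ofReal hs.le, Real.norm_eq_abs] using
    hu.integrable_norm_rpow (by simpa using hs) ENNReal.ofReal_ne_top

lemma Lnorm_eq_toReal_eLpNorm (hs : 0 < s) (hu : MemLp u (ENNReal.ofReal s) μ) :
    Lnorm μ s u = (eLpNorm u (ENNReal.ofReal s) μ).toReal := by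
  rw [hu.eLpNorm_eq_integral_rpow_norm (by simpa using hs) ENNReal.ofReal_ne_top,
    ENNReal.toReal_ofReal (rpow_nonneg (integral_nonneg fun _ => by positivity) _)]
  simp [Lnorm, Real.norm_eq_abs, ENNReal.toReal_ofReal hs.le]

lemma Lnorm_restrict_le (hs : 0 < s) (hu : MemLp u (ENNReal.ofReal s) μ) (A : Set X) :
    Lnorm (μ.restrict A) s u ≤ Lnorm μ s u := by
  rw [Lnorm_eq_toReal_eLpNorm hs hu, Lnorm_eq_toReal_eLpNorm hs (hu.restrict A)]
  exact ENNReal.toReal_mono hu.eLpNorm_ne_top (eLpNorm_mono_measure _ Measure.restrict_le_self)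

lemma Lnorm_indicator_const (hs : 0 < s) (hA : MeasurableSet A) (hμA : μ A ≠ ∞) (c : ℝ) :
    Lnorm μ s (A.indicator fun _ => c) = |c| * μ.real A ^ (1 / s) := by
  rw [Lnorm_eq_toReal_eLpNorm hs (memLp_indicator_const _ hA c (Or.inr hμA)),
    eLpNorm_indicator_const hA (by simpa using hs) ENNReal.ofReal_ne_top, ENNReal.toReal_mul,
    ← ENNReal.toReal_rpow, ENNReal.toReal_ofReal hs.le, toReal_enorm, Real.norm_eq_abs,
    measureReal_def]

lemma Lnorm_restrict_pos (hs : 0 < s) (hu : MemLp u (ENNReal.ofReal s) μ)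
    (hAu : A ⊆ {x | u x ≠ 0}) (hμA : μ A ≠ 0) :
    0 < Lnorm (μ.restrict A) s u := by
  refine rpow_pos_of_pos ?_ _
  rw [setIntegral_pos_iff_support_of_nonneg_ae (ae_of_all _ fun x => by positivity)
    (hu.integrable_abs_rpow hs).integrableOn, inter_eq_self_of_subset_right]
  · exact pos_iff_ne_zero.2 hμA
  · exact fun x hx => (rpow_pos_of_pos (abs_pos.2 (hAu hx)) s).ne'

lemma MeasureTheory.MemLp.exists_Lnorm_restrict_le (hs : 1 ≤ s)
    (hu : MemLp u (ENNReal.ofReal s) μ) {ε : ℝ} (hε : 0 < ε) :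
    ∃ δ > 0, ∀ A, MeasurableSet A → μ A ≤ ENNReal.ofReal δ → Lnorm (μ.restrict A) s u ≤ ε := by
  obtain ⟨δ, hδ, hsmall⟩ :=
    hu.eLpNorm_indicator_le (ENNReal.one_le_ofReal.2 hs) ENNReal.ofReal_ne_top hε
  refine ⟨δ, hδ, fun A hA hμA => ?_⟩
  rw [Lnorm_eq_toReal_eLpNorm (by linarith) (hu.restrict A),
    ← eLpNorm_indicator_eq_eLpNorm_restrict hA]
  exact ENNReal.toReal_le_of_le_ofReal hε.le (hsmall A hA hμA)

lemma integral_mul_le_Lnorm_mul_Lnorm (hrs : r.HolderConjugate s)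
    (hη : MemLp η (ENNReal.ofReal r) μ) (hh : MemLp h (ENNReal.ofReal s) μ) :
    ∫ x, η x * h x ∂μ ≤ Lnorm μ r η * Lnorm μ s h := by
  have holder := integral_mul_norm_le_Lp_mul_Lq hrs hη hh
  simp only [Real.norm_eq_abs] at holder
  calc ∫ x, η x * h x ∂μ ≤ |∫ x, η x * h x ∂μ| := le_abs_self _
    _ ≤ ∫ x, |η x * h x| ∂μ := abs_integral_le_integral_abs
    _ ≤ Lnorm μ r η * Lnorm μ s h := by simpa only [abs_mul, Lnorm] using holder

lemma tendsto_measure_of_tendsto_setIntegral [IsFiniteMeasure μ] {ι : Type*} {l : Filter ι}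
    {g : X → ℝ} (hg : Measurable g) (hg_int : Integrable g μ) {A : ι → Set X}
    (hA : ∀ i, MeasurableSet (A i)) (hAg : ∀ i, A i ⊆ {x | 0 < g x})
    (h : Tendsto (fun i => ∫ x in A i, g x ∂μ) l (𝓝 0)) :
    Tendsto (fun i => μ (A i)) l (𝓝 0) := by
  -- `μ (A i) = ∫_{A i} g⁻¹ dν` for `ν = g • μ`, and `g⁻¹` is `ν`-integrable
  have hgm : Measurable fun x => ENNReal.ofReal (g x) := hg.ennreal_ofReal
  have hgm_inv : Measurable fun x => (ENNReal.ofReal (g x))⁻¹ := hgm.inv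
  set ν := μ.withDensity fun x => ENNReal.ofReal (g x)
  have hν : ∀ i, ν (A i) = ENNReal.ofReal (∫ x in A i, g x ∂μ) := fun i => by
    rw [withDensity_apply _ (hA i), ofReal_integral_eq_lintegral_ofReal hg_int.integrableOn
      (ae_restrict_of_forall_mem (hA i) fun x hx => (hAg i hx).le)]
  have hμ : ∀ i, μ (A i) = ∫⁻ x in A i, (ENNReal.ofReal (g x))⁻¹ ∂ν := fun i => by
    rw [setLIntegral_withDensity_eq_setLIntegral_mul _ hgm hgm_inv (hA i), ← setLIntegral_one]
    refine setLIntegral_congr_fun (hA i) fun x hx => ?_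
    exact (ENNReal.mul_inv_cancel (ENNReal.ofReal_pos.2 (hAg i hx)).ne'
      ENNReal.ofReal_ne_top).symm
  have hfin : ∫⁻ x, (ENNReal.ofReal (g x))⁻¹ ∂ν ≠ ∞ := by
    rw [lintegral_withDensity_eq_lintegral_mul _ hgm hgm_inv]
    refine ne_top_of_le_ne_top (measure_ne_top μ univ) ?_
    calc ∫⁻ x, ((fun x => ENNReal.ofReal (g x)) * fun x => (ENNReal.ofReal (g x))⁻¹) x ∂μ
        ≤ ∫⁻ _, 1 ∂μ := lintegral_mono fun x => ENNReal.mul_inv_le_one _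
      _ = μ univ := lintegral_one
  simpa only [hμ] using tendsto_setLIntegral_zero hfin
    (by simpa [Function.comp_def, hν] using ENNReal.tendsto_ofReal h)

lemma IsUniformlySD.isSD [IsFiniteMeasure μ] (hs : 1 ≤ s) (hu : MemLp u (ENNReal.ofReal s) μ)
    (hSD : IsUniformlySD μ s u) : IsSD μ s u := by
  intro Ωk hmeas hsub hpos htend
  have hμ : Tendsto (fun k => μ (Ωk k)) atTop (𝓝 0) :=
    (ENNReal.tendsto_toReal_iff (fun k => measure_ne_top μ _) ENNReal.zero_ne_top).1
      (by simpa using htend)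
  have hN : ∀ k, 0 < Lnorm (μ.restrict (Ωk k)) s u := fun k =>
    Lnorm_restrict_pos (by linarith) hu (hsub k) (ENNReal.toReal_pos_iff.1 (hpos k)).1.ne'
  refine tendsto_order.2 ⟨fun a ha => Eventually.of_forall fun k =>
    ha.trans_le (div_nonneg ENNReal.toReal_nonneg (hN k).le), fun ε hε => ?_⟩
  obtain ⟨δ, hδ, hsmall_μ⟩ := hSD (ε / 2) (half_pos hε)
  obtain ⟨δ', hδ', hsmall_L⟩ := hu.exists_Lnorm_restrict_le hs hδ
  filter_upwards [hμ.eventually (Iic_mem_nhds (ENNReal.ofReal_pos.2 hδ'))] with k hk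
  rw [div_lt_iff₀ (hN k)]
  calc (μ (Ωk k)).toReal ≤ ε / 2 * Lnorm (μ.restrict (Ωk k)) s u :=
        hsmall_μ _ (hmeas k) (hsub k) (hsmall_L _ (hmeas k) hk)
    _ < ε * Lnorm (μ.restrict (Ωk k)) s u := mul_lt_mul_of_pos_right (half_lt_self hε) (hN k)

lemma IsSD.isUniformlySD [IsFiniteMeasure μ] (hs : 0 < s) (hu_meas : Measurable u)
    (hu : MemLp u (ENNReal.ofReal s) μ) (hSD : IsSD μ s u) : IsUniformlySD μ s u := by
  intro ε hε
  by_contra! H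
  choose A hA hAu hAL hAμ using fun k : ℕ => H (1 / (k + 1)) Nat.one_div_pos_of_nat
  set N := fun k => Lnorm (μ.restrict (A k)) s u
  have hN : Tendsto N atTop (𝓝 0) :=
    squeeze_zero (fun k => Lnorm_nonneg) hAL tendsto_one_div_add_atTop_nhds_zero_nat
  have hμ : Tendsto (fun k => μ (A k)) atTop (𝓝 0) := by
    refine tendsto_measure_of_tendsto_setIntegral (hu_meas.abs.pow_const s)
      (hu.integrable_abs_rpow hs) hA (fun k x hx => rpow_pos_of_pos (abs_pos.2 (hAu k hx)) s) ?_
    simpa [N, Lnorm_rpow hs.ne', zero_rpow hs.ne'] using hN.rpow_const (p := s) (Or.inr hs.le)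
  have hpos : ∀ k, 0 < μ.real (A k) := fun k =>
    (mul_nonneg hε.le Lnorm_nonneg).trans_lt (hAμ k)
  have hNpos : ∀ k, 0 < N k := fun k =>
    Lnorm_restrict_pos hs hu (hAu k) (ENNReal.toReal_pos_iff.1 (hpos k)).1.ne'
  have hratio := hSD A hA hAu hpos
    (by simpa [Function.comp_def] using (ENNReal.tendsto_toReal ENNReal.zero_ne_top).comp hμ)
  obtain ⟨k, hk⟩ := (hratio.eventually (gt_mem_nhds hε)).exists
  exact (hAμ k).not_gt ((div_lt_iff₀ (hNpos k)).1 hk)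

lemma suppMeasure_congr_ae (huv : u =ᵐ[μ] v) : suppMeasure μ u = suppMeasure μ v :=
  measureReal_congr (huv.preimage {0}ᶜ)

lemma suppMeasure_add_sub [IsFiniteMeasure μ] (hu : Measurable u) (hh : Measurable h) :
    suppMeasure μ (fun x => u x + h x) - suppMeasure μ u =
      μ.real {x | u x = 0 ∧ h x ≠ 0} - μ.real {x | u x ≠ 0 ∧ u x + h x = 0} := by
  have hS : MeasurableSet {x | u x ≠ 0} := (hu (measurableSet_singleton 0)).compl
  have hA : MeasurableSet {x | u x ≠ 0 ∧ u x + h x = 0} :=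
    hS.inter ((hu.add hh) (measurableSet_singleton 0))
  have hsupp := measureReal_inter_add_sdiff hS (μ := μ) (s := {x | u x + h x ≠ 0})
  have hu_split := measureReal_sdiff_add_inter hA (μ := μ) (s := {x | u x ≠ 0})
  rw [show {x | u x + h x ≠ 0} ∩ {x | u x ≠ 0} =
        {x | u x ≠ 0} \ {x | u x ≠ 0 ∧ u x + h x = 0} by
      ext x; simp only [mem_inter_iff, Set.mem_sdiff, mem_ofPred_eq]; tauto,
    show {x | u x + h x ≠ 0} \ {x | u x ≠ 0} = {x | u x = 0 ∧ h x ≠ 0} by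
      ext x; by_cases hx : u x = 0 <;> simp [hx]] at hsupp
  rw [inter_eq_self_of_subset_right fun x hx => hx.1] at hu_split
  unfold suppMeasure
  linarith

lemma inFSub_suppMeasure_congr_ae (huv : u =ᵐ[μ] v) :
    InFSub μ s (suppMeasure μ) u η ↔ InFSub μ s (suppMeasure μ) v η := by
  have hq : ∀ h : X → ℝ,
      suppMeasure μ (fun x => u x + h x) = suppMeasure μ (fun x => v x + h x) :=
    fun h => suppMeasure_congr_ae (huv.mono fun x hx => by simp only [hx])
  simp only [InFSub, hq, suppMeasure_congr_ae huv]

lemma inFSub_suppMeasure_of_forall_measurable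
    (H : ∀ ε > 0, ∃ δ > 0, ∀ h : X → ℝ, Measurable h → MemLp h (ENNReal.ofReal s) μ →
      Lnorm μ s h ≤ δ → suppMeasure μ (fun x => u x + h x) - suppMeasure μ u -
        ∫ x, η x * h x ∂μ ≥ -ε * Lnorm μ s h) :
    InFSub μ s (suppMeasure μ) u η := by
  intro ε hε
  obtain ⟨δ, hδ, H⟩ := H ε hε
  refine ⟨δ, hδ, fun h hh _ hLδ => ?_⟩
  set h' := hh.1.mk h
  have hh' : h =ᵐ[μ] h' := hh.1.ae_eq_mk
  have hL : Lnorm μ s h = Lnorm μ s h' := Lnorm_congr_ae (hh'.mono fun x hx => by rw [hx])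
  have hsum : (fun x => u x + h x) =ᵐ[μ] fun x => u x + h' x :=
    hh'.mono fun x hx => by simp only [hx]
  have hprod : (fun x => η x * h x) =ᵐ[μ] fun x => η x * h' x :=
    hh'.mono fun x hx => by simp only [hx]
  rw [hL, suppMeasure_congr_ae hsum, integral_congr_ae hprod]
  exact H h' hh.1.stronglyMeasurable_mk.measurable (hh.ae_eq hh') (hL ▸ hLδ)

lemma setIntegral_eq_zero_of_inFSub [IsFiniteMeasure μ] (hs : 0 < s)
    (hsub : InFSub μ s (suppMeasure μ) u η) {E : Set X} (hE : MeasurableSet E)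
    (hEu : E ⊆ {x | u x ≠ 0}) : ∫ x in E, η x ∂μ = 0 := by
  rcases eq_or_ne (μ E) 0 with hμE | hμE
  · exact setIntegral_measure_zero _ hμE
  set m := μ.real E ^ (1 / s)
  have hm : 0 < m := rpow_pos_of_pos (ENNReal.toReal_pos hμE (measure_ne_top μ E)) _
  have bound : ∀ ε > 0, ∃ δ > 0, ∀ c : ℝ, |c| * m = δ → c * ∫ x in E, η x ∂μ ≤ ε * δ := by
    intro ε hε
    obtain ⟨δ, hδ, H⟩ := hsub ε hε
    refine ⟨δ, hδ, fun c hc => ?_⟩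
    have hL : Lnorm μ s (E.indicator fun _ => c) = δ :=
      (Lnorm_indicator_const hs hE (measure_ne_top μ E) c).trans hc
    have hq : suppMeasure μ (fun x => u x + E.indicator (fun _ => c) x) ≤ suppMeasure μ u := by
      refine measureReal_mono fun x hx hux => hx ?_
      have hxE : x ∉ E := fun hxE => hEu hxE hux
      simp [hux, hxE]
    have hint : ∫ x, η x * E.indicator (fun _ => c) x ∂μ = c * ∫ x in E, η x ∂μ := by
      simp_rw [← indicator_mul_right, integral_indicator hE, integral_mul_const, mul_comm]
    have := H _ (memLp_indicator_const _ hE c (Or.inr (measure_ne_top μ E))) (hL ▸ hδ) hL.le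
    rw [hL, hint] at this
    linarith
  refine abs_eq_zero.1 (le_antisymm (le_of_forall_pos_le_add fun ε hε => ?_) (abs_nonneg _))
  obtain ⟨δ, hδ, H⟩ := bound (ε / m) (div_pos hε hm)
  have ht : 0 < δ / m := div_pos hδ hm
  have hc : |δ / m| * m = δ := by rw [abs_of_pos ht, div_mul_cancel₀ _ hm.ne']
  have h₁ := H (δ / m) hc
  have h₂ := H (-(δ / m)) (by rwa [abs_neg])
  rw [show ε / m * δ = δ / m * ε by ring] at h₁ h₂
  have hI : δ / m * |∫ x in E, η x ∂μ| ≤ δ / m * ε := by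
    rcases abs_cases (∫ x in E, η x ∂μ) with ⟨habs, -⟩ | ⟨habs, -⟩ <;> rw [habs] <;> linarith
  simpa using le_of_mul_le_mul_left hI ht

lemma ae_eq_zero_of_inFSub [IsFiniteMeasure μ] (hs : 0 < s) (hu : Measurable u)
    (hη : Integrable η μ) (hsub : InFSub μ s (suppMeasure μ) u η) :
    ∀ᵐ x ∂μ, u x ≠ 0 → η x = 0 := by
  have hS : MeasurableSet {x | u x ≠ 0} := (hu (measurableSet_singleton 0)).compl
  refine (ae_restrict_iff' hS).1 (ae_eq_zero_of_forall_setIntegral_eq_of_sigmaFinite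
    (fun F _ _ => hη.integrableOn.restrict) fun F hF _ => ?_)
  rw [Measure.restrict_restrict hF]
  exact setIntegral_eq_zero_of_inFSub hs hsub (hF.inter hS) inter_subset_right

lemma isUniformlySD_of_inFSub [IsFiniteMeasure μ] (hs : 0 < s)
    (hu : MemLp u (ENNReal.ofReal s) μ) (hvan : ∀ᵐ x ∂μ, u x ≠ 0 → η x = 0)
    (hsub : InFSub μ s (suppMeasure μ) u η) :
    IsUniformlySD μ s u := by
  intro ε hε
  obtain ⟨δ, hδ, H⟩ := hsub ε hε
  refine ⟨δ, hδ, fun A hA hAu hAδ => ?_⟩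
  rcases eq_or_ne (μ A) 0 with hμA | hμA
  · simpa [measureReal_def, hμA] using mul_nonneg hε.le Lnorm_nonneg
  set h : X → ℝ := fun x => -A.indicator u x
  have hL : Lnorm μ s h = Lnorm (μ.restrict A) s u :=
    (Lnorm_congr_ae (ae_of_all _ fun x => abs_neg _)).trans (Lnorm_indicator hs.ne' hA u)
  have hq : suppMeasure μ (fun x => u x + h x) = μ.real ({x | u x ≠ 0} \ A) := by
    unfold suppMeasure
    congr 1
    ext x
    by_cases hx : x ∈ A <;> simp [h, hx]
  have hint : ∫ x, η x * h x ∂μ = 0 := by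
    refine integral_eq_zero_of_ae (hvan.mono fun x hx => ?_)
    by_cases hxA : x ∈ A
    · simp [hx (hAu hxA)]
    · simp [h, hxA]
  have := H h (hu.indicator hA).neg (hL ▸ Lnorm_restrict_pos hs hu hAu hμA) (hL ▸ hAδ)
  rw [hq, hint, hL, measureReal_sdiff hAu hA] at this
  unfold suppMeasure at this
  linarith

lemma exists_setIntegral_mul_le [IsFiniteMeasure μ] (hrs : r.HolderConjugate s)
    (hη : MemLp η (ENNReal.ofReal r) μ) {ε : ℝ} (hε : 0 < ε) :
    ∃ δ > 0, ∀ B, MeasurableSet B → ∀ h, MemLp h (ENNReal.ofReal s) μ → Lnorm μ s h ≤ δ →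
      ∫ x in B, η x * h x ∂μ ≤ μ.real B + ε * Lnorm μ s h := by
  obtain ⟨δ₀, hδ₀, hsmall⟩ := hη.exists_Lnorm_restrict_le hrs.lt.le hε
  set K := Lnorm μ r η + 1
  have hK : 0 < K := by positivity [Lnorm_nonneg (μ := μ) (s := r) (u := η)]
  refine ⟨δ₀ / K, div_pos hδ₀ hK, fun B hB h hh hLδ => ?_⟩
  have hL := Lnorm_nonneg (μ := μ) (s := s) (u := h)
  have holder : ∫ x in B, η x * h x ∂μ ≤ Lnorm (μ.restrict B) r η * Lnorm μ s h :=
    (integral_mul_le_Lnorm_mul_Lnorm hrs (hη.restrict B) (hh.restrict B)).trans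
      (mul_le_mul_of_nonneg_left (Lnorm_restrict_le hrs.symm.pos hh B) Lnorm_nonneg)
  by_cases hμB : μ B ≤ ENNReal.ofReal δ₀
  · have := mul_le_mul_of_nonneg_right (hsmall B hB hμB) hL
    linarith [measureReal_nonneg (μ := μ) (s := B)]
  · have hδ₀B : δ₀ < μ.real B :=
      (ENNReal.ofReal_lt_iff_lt_toReal hδ₀.le (measure_ne_top μ B)).1 (not_le.1 hμB)
    have hKL : K * Lnorm μ s h ≤ δ₀ := (le_div_iff₀' hK).1 hLδ
    have hηB : Lnorm (μ.restrict B) r η ≤ K :=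
      (Lnorm_restrict_le hrs.pos hη B).trans (le_add_of_nonneg_right zero_le_one)
    nlinarith [mul_le_mul_of_nonneg_right hηB hL]

lemma inFSub_of_isUniformlySD [IsFiniteMeasure μ] (hsr : s.HolderConjugate r)
    (hu : Measurable u) (hη : MemLp η (ENNReal.ofReal r) μ) (hvan : ∀ᵐ x ∂μ, u x ≠ 0 → η x = 0)
    (hSD : IsUniformlySD μ s u) : InFSub μ s (suppMeasure μ) u η := by
  refine inFSub_suppMeasure_of_forall_measurable fun ε hε => ?_
  obtain ⟨δ₁, hδ₁, hA⟩ := hSD (ε / 2) (half_pos hε)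
  obtain ⟨δ₂, hδ₂, hB⟩ := exists_setIntegral_mul_le hsr.symm hη (half_pos hε)
  refine ⟨min δ₁ δ₂, lt_min hδ₁ hδ₂, fun h hh_meas hh hLδ => ?_⟩
  set A := {x | u x ≠ 0 ∧ u x + h x = 0}
  set B := {x | u x = 0 ∧ h x ≠ 0}
  have hAmeas : MeasurableSet A :=
    (hu (measurableSet_singleton 0)).compl.inter ((hu.add hh_meas) (measurableSet_singleton 0))
  have hBmeas : MeasurableSet B :=
    (hu (measurableSet_singleton 0)).inter (hh_meas (measurableSet_singleton 0)).compl
  have hAL : Lnorm (μ.restrict A) s u ≤ Lnorm μ s h := by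
    have hAh : ∀ᵐ x ∂μ.restrict A, |u x| = |h x| :=
      (ae_restrict_iff' hAmeas).2 (ae_of_all _ fun x hx => by
        rw [eq_neg_of_add_eq_zero_left hx.2, abs_neg])
    exact (Lnorm_congr_ae hAh).trans_le (Lnorm_restrict_le hsr.pos hh A)
  have hμA : μ.real A ≤ ε / 2 * Lnorm μ s h :=
    (hA A hAmeas (fun x hx => hx.1) (hAL.trans (hLδ.trans (min_le_left _ _)))).trans
      (mul_le_mul_of_nonneg_left hAL (by positivity))
  have hint : ∫ x, η x * h x ∂μ = ∫ x in B, η x * h x ∂μ := by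
    rw [← integral_indicator hBmeas]
    refine integral_congr_ae (hvan.mono fun x hx => ?_)
    by_cases hxB : x ∈ B
    · rw [indicator_of_mem hxB]
    rw [indicator_of_notMem hxB]
    by_cases hux : u x = 0
    · simp [B, hux] at hxB
      simp [hxB]
    · simp [hx hux]
  have hμB := hB B hBmeas h hh (hLδ.trans (min_le_right _ _))
  rw [suppMeasure_add_sub hu hh_meas, hint]
  linarith

lemma IsSD.congr_ae (hSD : IsSD μ s u) (huv : u =ᵐ[μ] v) : IsSD μ s v := by
  intro Ωk hmeas hsub hpos htend
  set G := (toMeasurable μ {x | u x ≠ v x})ᶜ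
  have hG : MeasurableSet G := (measurableSet_toMeasurable _ _).compl
  have hGc : μ Gᶜ = 0 := by
    rw [compl_compl, measure_toMeasurable]
    exact ae_iff.1 huv
  have hGuv : ∀ x ∈ G, u x = v x := fun x hx => not_not.1 fun hne =>
    hx (subset_toMeasurable _ _ hne)
  have hμ : ∀ k, μ (Ωk k ∩ G) = μ (Ωk k) := fun k => measure_inter_conull hGc
  have hL : ∀ k, Lnorm (μ.restrict (Ωk k ∩ G)) s u = Lnorm (μ.restrict (Ωk k)) s v := by
    intro k
    rw [Measure.restrict_congr_set (inter_ae_eq_left_of_ae_eq_univ (ae_eq_univ.2 hGc))]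
    exact Lnorm_congr_ae (ae_restrict_of_ae (huv.mono fun x hx => by rw [hx]))
  simpa only [hμ, hL] using hSD (fun k => Ωk k ∩ G) (fun k => (hmeas k).inter hG)
    (fun k x hx => (hGuv x hx.2).trans_ne (hsub k hx.1)) (by simpa only [hμ] using hpos)
    (by simpa only [hμ] using htend)

end

theorem fsub_qs0_characterization_general (d : ℕ) (Ω : Set (Fin d → ℝ))
    (hfin : volume Ω < ⊤) (s r : ℝ) (hs : 1 < s)
    (hr : 1 / s + 1 / r = 1)
    (ubar : (Fin d → ℝ) → ℝ) (hubar : MemLp ubar (ENNReal.ofReal s) (volume.restrict Ω)) :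
    (IsSD (volume.restrict Ω) s ubar →
      ∀ η : (Fin d → ℝ) → ℝ,
        (MemLp η (ENNReal.ofReal r) (volume.restrict Ω) ∧
          InFSub (volume.restrict Ω) s
            (fun u => ((volume.restrict Ω) {x | u x ≠ 0}).toReal) ubar η) ↔
        (MemLp η (ENNReal.ofReal r) (volume.restrict Ω) ∧
          ∀ᵐ x ∂(volume.restrict Ω), ubar x ≠ 0 → η x = 0)) ∧
    (¬ IsSD (volume.restrict Ω) s ubar →
      ¬ ∃ η : (Fin d → ℝ) → ℝ, MemLp η (ENNReal.ofReal r) (volume.restrict Ω) ∧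
        InFSub (volume.restrict Ω) s
          (fun u => ((volume.restrict Ω) {x | u x ≠ 0}).toReal) ubar η) := by
  set μ := volume.restrict Ω
  have : IsFiniteMeasure μ := isFiniteMeasure_restrict.2 hfin.ne
  have hsr : s.HolderConjugate r :=
    Real.holderConjugate_iff.2 ⟨hs, by simpa only [one_div] using hr⟩
  set u := hubar.1.mk ubar
  have hu : Measurable u := hubar.1.stronglyMeasurable_mk.measurable
  have hu_ae : ubar =ᵐ[μ] u := hubar.1.ae_eq_mk
  have hu_mem : MemLp u (ENNReal.ofReal s) μ := hubar.ae_eq hu_ae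
  have hFS : ∀ η, InFSub μ s (suppMeasure μ) ubar η ↔ InFSub μ s (suppMeasure μ) u η :=
    fun η => inFSub_suppMeasure_congr_ae hu_ae
  have hvan : ∀ η : (Fin d → ℝ) → ℝ,
      (∀ᵐ x ∂μ, ubar x ≠ 0 → η x = 0) ↔ ∀ᵐ x ∂μ, u x ≠ 0 → η x = 0 :=
    fun η => eventually_congr (hu_ae.mono fun x hx => by rw [hx])
  have vanish : ∀ η, MemLp η (ENNReal.ofReal r) μ → InFSub μ s (suppMeasure μ) ubar η →
      ∀ᵐ x ∂μ, u x ≠ 0 → η x = 0 := fun η hη hF =>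
    ae_eq_zero_of_inFSub hsr.pos hu (hη.integrable (ENNReal.one_le_ofReal.2 hsr.symm.lt.le))
      ((hFS η).1 hF)
  refine ⟨fun hSD η => ⟨?_, ?_⟩, ?_⟩
  · rintro ⟨hη, hF⟩
    exact ⟨hη, (hvan η).2 (vanish η hη hF)⟩
  · rintro ⟨hη, hv⟩
    have hSDu : IsUniformlySD μ s u := (hSD.congr_ae hu_ae).isUniformlySD hsr.pos hu hu_mem
    exact ⟨hη, (hFS η).2 (inFSub_of_isUniformlySD hsr hu hη ((hvan η).1 hv) hSDu)⟩
  · rintro hnSD ⟨η, hη, hF⟩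
    have hSDu : IsUniformlySD μ s u :=
      isUniformlySD_of_inFSub hsr.pos hu_mem (vanish η hη hF) ((hFS η).1 hF)
    exact hnSD ((hSDu.isSD hs.le hu_mem).congr_ae hu_ae.symm)

/-- For `s ∈ (1,∞)`, the Fréchet subdifferential of `q_{s,0}(u) = λ({u ≠ 0})` at `ubar`
equals `{η ∈ L^r : η = 0 a.e. on {ubar ≠ 0}}` if `ubar` is s-SD, and is empty otherwise. -/
theorem fsub_qs0_characterization (d : ℕ) (Ω : Set (Fin d → ℝ)) (hΩ : MeasurableSet Ω)
    (h0 : 0 < volume Ω) (hfin : volume Ω < ⊤) (s r : ℝ) (hs : 1 < s)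
    (hr : 1 / s + 1 / r = 1)
    (ubar : (Fin d → ℝ) → ℝ) (hubar : MemLp ubar (ENNReal.ofReal s) (volume.restrict Ω)) :
    (IsSD (volume.restrict Ω) s ubar →
      ∀ η : (Fin d → ℝ) → ℝ,
        (MemLp η (ENNReal.ofReal r) (volume.restrict Ω) ∧
          InFSub (volume.restrict Ω) s
            (fun u => ((volume.restrict Ω) {x | u x ≠ 0}).toReal) ubar η) ↔
        (MemLp η (ENNReal.ofReal r) (volume.restrict Ω) ∧
          ∀ᵐ x ∂(volume.restrict Ω), ubar x ≠ 0 → η x = 0)) ∧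
    (¬ IsSD (volume.restrict Ω) s ubar →
      ¬ ∃ η : (Fin d → ℝ) → ℝ, MemLp η (ENNReal.ofReal r) (volume.restrict Ω) ∧
        InFSub (volume.restrict Ω) s
          (fun u => ((volume.restrict Ω) {x | u x ≠ 0}).toReal) ubar η) :=
  fsub_qs0_characterization_general d Ω hfin s r hs hr ubar hubar
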